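/- arXiv:2406.08233 — 4 statements merged into one kernel-verified Lean document; each statement's English description precedes it below -/
import Mathlib

section
/- Let K be a commutative ring, X a set, L the free Lie algebra over K on X, and S a subset of X. Let 𝔰 be the Lie ideal of L generated by the generators indexed by X − S. Then 𝔰 is itself a free Lie algebra over K, freely generated by the iterated brackets ad(ξ_{s₁})∘ad(ξ_{s₂})∘⋯∘ad(ξ_{s_k})(ξ_x) = [ξ_{s₁},[ξ_{s₂},…,[ξ_{s_k}, ξ_x]…]], indexed by pairs (w, x) where w = (s₁,…,s_k) ranges over all finite words in S (including the empty word, giving ξ_x itself) and x ranges over X − S. Precisely: the canonical Lie algebra homomorphism from the free Lie algebra over K on the index type (List S) × (X − S) to L, sending (w, x) to the iterated bracket above, is injective with image exactly the underlying Lie subalgebra of 𝔰 (so it induces a Lie algebra isomorphism onto 𝔰). -/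
open LieSubmodule

/-!
Write `F` for the free Lie algebra on `List S × (X − S)` and `φ : F → L` for the map of the
statement. Sending `ξ_s` to the derivation of `F` that prepends `s` to the word makes the
free Lie algebra on `S` act on `F` by derivations. In the semidirect sum of `F` with the free
Lie algebra on `S`, put `ρ ξ_s = ξ_s` for `s ∈ S` and `ρ ξ_x = ξ_([], x)` for `x ∉ S`. Then
`ρ ∘ φ` is the inclusion of `F`, so `φ` is injective.

The range of `φ` lies in `𝔰` and contains every `ξ_x` with `x ∉ S`. Also
`ad ξ_s (φ ξ_(w, x)) = φ ξ_(s :: w, x)`, so each generator of `L` normalizes the range.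
The range is therefore an ideal, and it equals `𝔰`.
-/

namespace LieAlgebra.ofTwoCocycle

open LieModule.Cohomology

variable {R L M : Type*} [CommRing R] [LieRing L] [LieAlgebra R L] [AddCommGroup M] [Module R M]
  [LieRingModule L M] [LieModule R L M] (c : twoCocycle R L M)

def fst : ofTwoCocycle c →ₗ⁅R⁆ L where
  toFun x := ((ofProd c).symm x).1
  map_add' _ _ := rfl
  map_smul' _ _ := rfl
  map_lie' := rfl

end LieAlgebra.ofTwoCocycle

namespace FreeLieAlgebra

section Induction

variable {R X : Type*} [CommRing R]

theorem lieSpan_range_of_eq_top :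
    LieSubalgebra.lieSpan R (FreeLieAlgebra R X) (Set.range (of R)) = ⊤ := by
  set H := LieSubalgebra.lieSpan R (FreeLieAlgebra R X) (Set.range (of R))
  have hH : H.incl.comp (lift R fun x => ⟨of R x, LieSubalgebra.subset_lieSpan ⟨x, rfl⟩⟩) =
      LieHom.id :=
    hom_ext fun x => by simp
  rw [eq_top_iff]
  intro z _
  have hz := LieHom.congr_fun hH z
  rw [LieHom.comp_apply, LieHom.id_apply] at hz
  exact hz ▸ Subtype.property _

theorem induction_on {p : FreeLieAlgebra R X → Prop} (z : FreeLieAlgebra R X)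
    (of : ∀ x, p (of R x)) (zero : p 0) (add : ∀ a b, p a → p b → p (a + b))
    (smul : ∀ (t : R) a, p a → p (t • a)) (lie : ∀ a b, p a → p b → p ⁅a, b⁆) :
    p z := by
  have hz : z ∈ LieSubalgebra.lieSpan R _ (Set.range (FreeLieAlgebra.of R)) := by
    simp [lieSpan_range_of_eq_top]
  induction hz using LieSubalgebra.lieSpan_induction with
  | mem _ h => obtain ⟨x, rfl⟩ := h; exact of x
  | zero => exact zero
  | add a b _ _ ha hb => exact add a b ha hb
  | smul t a _ ha => exact smul t a ha
  | lie a b _ _ ha hb => exact lie a b ha hb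

theorem mem_normalizer_range_of_forall_lie_of_mem {L : Type*} [LieRing L] [LieAlgebra R L]
    (f : FreeLieAlgebra R X →ₗ⁅R⁆ L) {y : L} (h : ∀ x, ⁅y, f (of R x)⁆ ∈ f.range) :
    y ∈ f.range.normalizer := by
  rw [LieSubalgebra.mem_normalizer_iff]
  intro _ hz
  obtain ⟨z, rfl⟩ := (f.mem_range _).1 hz
  clear hz
  induction z using induction_on with
  | of x => exact h x
  | zero => simp
  | add a b ha hb => rw [map_add, lie_add]; exact add_mem ha hb
  | smul t a ha => rw [map_smul, lie_smul]; exact f.range.smul_mem t ha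
  | lie a b ha hb =>
    rw [LieHom.map_lie, leibniz_lie]
    exact add_mem (f.range.lie_mem ha (f.mem_range_self b))
      (f.range.lie_mem (f.mem_range_self a) hb)

end Induction

section Derivation

open LieAlgebra LieModule.Cohomology

variable {R X M : Type*} [CommRing R] [AddCommGroup M] [Module R M]
  [LieRingModule (FreeLieAlgebra R X) M] [LieModule R (FreeLieAlgebra R X) M]

/-- The target is the trivial extension `F ⋉ M` (by the `2`-cocycle `0`), where a map
`z ↦ (z, D z)` is a Lie homomorphism exactly when `D` is a derivation. -/
noncomputable def derivationGraph (f : X → M) :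
    FreeLieAlgebra R X →ₗ⁅R⁆ ofTwoCocycle (0 : twoCocycle R (FreeLieAlgebra R X) M) :=
  lift R fun x => ofProd _ (of R x, f x)

theorem fst_derivationGraph (f : X → M) (z : FreeLieAlgebra R X) :
    ((ofProd _).symm (derivationGraph f z)).1 = z := by
  suffices (ofTwoCocycle.fst _).comp (derivationGraph f) = LieHom.id from
    LieHom.congr_fun this z
  exact hom_ext fun x => by simp [derivationGraph]; rfl

noncomputable def liftDerivation (f : X → M) : LieDerivation R (FreeLieAlgebra R X) M where
  toFun z := ((ofProd _).symm (derivationGraph f z)).2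
  map_add' _ _ := by simp
  map_smul' _ _ := by simp
  leibniz' a b := by simp [bracket_ofTwoCocycle, fst_derivationGraph]

@[simp] theorem liftDerivation_of (f : X → M) (x : X) : liftDerivation f (of R x) = f x := by
  simp [liftDerivation, derivationGraph]

end Derivation

namespace Elimination

open LieAlgebra

variable (R : Type*) [CommRing R] {X : Type*} (S : Set X)

noncomputable def iteratedBracket (p : List S × ↥Sᶜ) : FreeLieAlgebra R X :=
  p.1.foldr (fun s b => ⁅of R (s : X), b⁆) (of R (p.2 : X))

theorem iteratedBracket_nil (x : ↥Sᶜ) : iteratedBracket R S ([], x) = of R (x : X) := rfl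

theorem iteratedBracket_cons (s : S) (w : List S) (x : ↥Sᶜ) :
    iteratedBracket R S (s :: w, x) = ⁅of R (s : X), iteratedBracket R S (w, x)⁆ := rfl

noncomputable def eliminationHom :
    FreeLieAlgebra R (List S × ↥Sᶜ) →ₗ⁅R⁆ FreeLieAlgebra R X :=
  lift R (iteratedBracket R S)

theorem eliminationHom_of (p : List S × ↥Sᶜ) :
    eliminationHom R S (of R p) = iteratedBracket R S p :=
  lift_of_apply _ _

noncomputable def prependDerivation (s : S) :
    LieDerivation R (FreeLieAlgebra R (List S × ↥Sᶜ)) (FreeLieAlgebra R (List S × ↥Sᶜ)) :=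
  liftDerivation fun p => of R (s :: p.1, p.2)

noncomputable def prependAction :
    FreeLieAlgebra R S →ₗ⁅R⁆
      LieDerivation R (FreeLieAlgebra R (List S × ↥Sᶜ))
        (FreeLieAlgebra R (List S × ↥Sᶜ)) :=
  lift R (prependDerivation R S)

open Classical in
noncomputable def retraction :
    FreeLieAlgebra R X →ₗ⁅R⁆
      FreeLieAlgebra R (List S × ↥Sᶜ) ⋊⁅prependAction R S⁆ FreeLieAlgebra R S :=
  lift R fun x => if h : x ∈ S then SemiDirectSum.inr _ (of R ⟨x, h⟩)
    else SemiDirectSum.inl _ (of R ([], ⟨x, h⟩))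

theorem retraction_iteratedBracket (p : List S × ↥Sᶜ) :
    retraction R S (iteratedBracket R S p) = SemiDirectSum.inl _ (of R p) := by
  obtain ⟨w, x⟩ := p
  induction w with
  | nil => rw [iteratedBracket_nil, retraction, lift_of_apply, dif_neg x.2]
  | cons s w ih =>
    rw [iteratedBracket_cons, LieHom.map_lie, ih, retraction, lift_of_apply, dif_pos s.2]
    simp only [SemiDirectSum.lie_eq_mk, SemiDirectSum.inl_eq_mk, SemiDirectSum.inr_eq_mk]
    simp [prependAction, prependDerivation]

theorem retraction_comp_eliminationHom :
    (retraction R S).comp (eliminationHom R S) = SemiDirectSum.inl _ :=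
  hom_ext fun p => by rw [LieHom.comp_apply, eliminationHom_of, retraction_iteratedBracket]

theorem eliminationHom_injective : Function.Injective (eliminationHom R (X := X) S) := by
  refine .of_comp (f := retraction R S) ?_
  rw [← LieHom.coe_comp, retraction_comp_eliminationHom]
  exact SemiDirectSum.inl_injective _

theorem normalizer_range_eliminationHom_eq_top :
    (eliminationHom R (X := X) S).range.normalizer = ⊤ := by
  rw [eq_top_iff, ← lieSpan_range_of_eq_top, LieSubalgebra.lieSpan_le]
  rintro _ ⟨x, rfl⟩
  by_cases hx : x ∈ S
  · refine mem_normalizer_range_of_forall_lie_of_mem _ fun p => ?_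
    rw [eliminationHom_of, ← iteratedBracket_cons R S ⟨x, hx⟩]
    exact ⟨of R _, eliminationHom_of R S _⟩
  · exact LieSubalgebra.le_normalizer _ ⟨of R ([], ⟨x, hx⟩), eliminationHom_of R S _⟩

theorem iteratedBracket_mem_lieSpan (p : List S × ↥Sᶜ) :
    iteratedBracket R S p ∈ lieSpan R (FreeLieAlgebra R X) (of R '' Sᶜ) := by
  obtain ⟨w, x⟩ := p
  induction w with
  | nil => exact subset_lieSpan ⟨x, x.2, rfl⟩
  | cons s w ih => rw [iteratedBracket_cons]; exact lie_mem _ ih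

theorem range_eliminationHom :
    Set.range (eliminationHom R (X := X) S) =
      (lieSpan R (FreeLieAlgebra R X) (of R '' Sᶜ) : Set (FreeLieAlgebra R X)) := by
  apply subset_antisymm
  · rintro _ ⟨z, rfl⟩
    induction z using induction_on with
    | of p => rw [eliminationHom_of]; exact iteratedBracket_mem_lieSpan R S p
    | zero => simp
    | add a b ha hb => rw [map_add]; exact add_mem ha hb
    | smul t a ha => rw [map_smul]; exact SMulMemClass.smul_mem t ha
    | lie a b _ hb => rw [LieHom.map_lie]; exact lie_mem _ hb
  · intro y hy
    suffices y ∈ (eliminationHom R S).range from ((eliminationHom R S).mem_range y).1 this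
    induction hy using LieSubmodule.lieSpan_induction with
    | mem _ h =>
      obtain ⟨x, hx, rfl⟩ := h
      exact ⟨of R ([], ⟨x, hx⟩), eliminationHom_of R S _⟩
    | zero => exact (eliminationHom R S).range.zero_mem
    | add a b _ _ ha hb => exact (eliminationHom R S).range.add_mem ha hb
    | smul t a _ ha => exact (eliminationHom R S).range.smul_mem t ha
    | lie a b _ hb =>
      refine LieSubalgebra.ideal_in_normalizer ?_ hb
      rw [normalizer_range_eliminationHom_eq_top]
      exact LieSubalgebra.mem_top a

end Elimination

end FreeLieAlgebra

/-- **The Elimination Theorem.** Let `K` be a commutative ring, `X` a set, `L` the free Lie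
algebra over `K` on `X` and `S ⊆ X`. Let `𝔰` be the Lie ideal of `L` generated by the
generators indexed by `X − S`. Then the canonical Lie algebra homomorphism from the free Lie
algebra on `(List S) × (X − S)` to `L`, sending `((s₁,…,s_k), x)` to the iterated bracket
`[ξ_{s₁},[ξ_{s₂},…,[ξ_{s_k}, ξ_x]…]]`, is injective with image exactly the underlying
Lie subalgebra of `𝔰`; in particular `𝔰` is a free Lie algebra on these elements. -/
theorem free_lie_elimination (K : Type*) [CommRing K] (X : Type*) (S : Set X)
    (𝔰 : LieIdeal K (FreeLieAlgebra K X))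
    (h𝔰 : 𝔰 = lieSpan K (FreeLieAlgebra K X) (FreeLieAlgebra.of K '' Sᶜ))
    (φ : FreeLieAlgebra K ((List ↥S) × ↥(Sᶜ)) →ₗ⁅K⁆ FreeLieAlgebra K X)
    (hφ : φ = FreeLieAlgebra.lift K (fun p : (List ↥S) × ↥(Sᶜ) =>
      p.1.foldr (fun s b => ⁅FreeLieAlgebra.of K (s : X), b⁆)
        (FreeLieAlgebra.of K (p.2 : X)))) :
    Function.Injective φ ∧ Set.range φ = (𝔰 : Set (FreeLieAlgebra K X)) := by
  subst hφ h𝔰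
  exact ⟨FreeLieAlgebra.Elimination.eliminationHom_injective K S,
    FreeLieAlgebra.Elimination.range_eliminationHom K S⟩
end

section
/- Let K be a commutative ring, X a set, L the free Lie algebra over K on X, and S a subset of X. Let 𝔰 be the Lie ideal of L generated by the generators indexed by X − S, and let W be the universal enveloping algebra of the free Lie algebra over K on S. The adjoint action of the generators ξ_s (s ∈ S) on 𝔰 preserves 𝔰 and descends to the abelianization 𝔰/[𝔰,𝔰], making 𝔰/[𝔰,𝔰] a module over W. Then 𝔰/[𝔰,𝔰] is a free W-module with basis the images of the generators ξ_x, x ∈ X − S; equivalently, the images in 𝔰/[𝔰,𝔰] of the iterated brackets [ξ_{s₁},[…,[ξ_{s_k}, ξ_x]…]] (words (s₁,…,s_k) in S, x ∈ X − S) form a K-basis of 𝔰/[𝔰,𝔰]. -/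
/-!
Map the free Lie algebra on `X` to the semidirect product `N ⋊ L(S)`, where `N` is the free
`K`-module on pairs (word in `S`, element of `X − S`) made an abelian Lie algebra, `L(S)` acts on
`N` by prepending letters, `ξ_s ↦ ξ_s` and `ξ_x ↦ e_([], x)`. This map sends `𝔰` into the abelian
ideal `N`, so it factors through `𝔰/[𝔰,𝔰]`, and it sends the iterated bracket indexed by `p` to
`e_p`: the images of the iterated brackets are independent. Their span is stable under `ad ξ_s`
(prepending a letter) and under `ad ξ_x` for `x ∉ S` (which is zero, as `ξ_x ∈ 𝔰`), hence under all
of `L`; being an `L`-submodule that contains the images of the generators of `𝔰`, it is everything.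
-/

open LieSubmodule

section

variable (K : Type*) [CommRing K] (L : Type*) [LieRing L] [LieAlgebra K L]

/-- The derived ideal `[I, I]` of a Lie ideal `I`, viewed as a Lie submodule (for the
ambient `L`-action) of `I`. -/
def derivedLieSubmodule (I : LieIdeal K L) : LieSubmodule K L I :=
  lieSpan K L {z : I | ∃ x y : I, (z : L) = ⁅(x : L), (y : L)⁆}

/-- The abelianization `I/[I,I]` of a Lie ideal `I`. -/
abbrev LieIdealAb (I : LieIdeal K L) : Type _ := I ⧸ derivedLieSubmodule K L I

end

/-- The Lie ideal `𝔰` of the free Lie algebra on `X` generated by the generators indexed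
by `X − S`. -/
noncomputable abbrev genIdeal (K : Type*) [CommRing K] (X : Type*) (S : Set X) :
    LieIdeal K (FreeLieAlgebra K X) :=
  lieSpan K (FreeLieAlgebra K X) (FreeLieAlgebra.of K '' Sᶜ)

/-- The iterated bracket `[ξ_{s₁},[…,[ξ_{s_k}, ξ_x]…]]`, an element of the ideal `𝔰`. -/
noncomputable def iterBracket (K : Type*) [CommRing K] (X : Type*) (S : Set X)
    (p : (List ↥S) × ↥(Sᶜ)) : ↥(genIdeal K X S) :=
  p.1.foldr (fun s m => ⁅FreeLieAlgebra.of K (s : X), m⁆)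
    ⟨FreeLieAlgebra.of K (p.2 : X),
      subset_lieSpan (Set.mem_image_of_mem _ p.2.2)⟩

namespace FreeLieAlgebra

variable {R X : Type*} [CommRing R]

theorem lieSubalgebra_eq_top_of_of_mem {H : LieSubalgebra R (FreeLieAlgebra R X)}
    (h : ∀ x, of R x ∈ H) : H = ⊤ := by
  let j : FreeLieAlgebra R X →ₗ⁅R⁆ H := lift R fun x => ⟨of R x, h x⟩
  have hj : H.incl.comp j = LieHom.id := hom_ext fun x => by simp [j]
  refine eq_top_iff.mpr fun a _ => ?_
  rw [← LieHom.id_apply (R := R) a, ← hj]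
  exact (j a).2

theorem lie_mem_of_forall_of_lie_mem {M : Type*} [AddCommGroup M] [Module R M]
    [LieRingModule (FreeLieAlgebra R X) M] [LieModule R (FreeLieAlgebra R X) M]
    {P : Submodule R M} (h : ∀ x : X, ∀ m ∈ P, ⁅of R x, m⁆ ∈ P) (a : FreeLieAlgebra R X) :
    ∀ m ∈ P, ⁅a, m⁆ ∈ P := by
  let stab : LieSubalgebra R (FreeLieAlgebra R X) :=
    { carrier := {a | ∀ m ∈ P, ⁅a, m⁆ ∈ P}
      add_mem' := fun ha hb m hm => by rw [add_lie]; exact P.add_mem (ha m hm) (hb m hm)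
      zero_mem' := fun m _ => by rw [zero_lie]; exact P.zero_mem
      smul_mem' := fun t a ha m hm => by rw [smul_lie]; exact P.smul_mem t (ha m hm)
      lie_mem' := fun ha hb m hm => by
        rw [lie_lie]; exact P.sub_mem (ha _ (hb m hm)) (hb _ (ha m hm)) }
  have : stab = ⊤ := lieSubalgebra_eq_top_of_of_mem h
  exact (this ▸ LieSubalgebra.mem_top a : a ∈ stab)

end FreeLieAlgebra

namespace LieSubmodule

variable {R L : Type*} [CommRing R] [LieRing L] [LieAlgebra R L]

theorem eq_top_of_forall_mem_lieSpan_generators {s : Set L}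
    (T : LieSubmodule R L (lieSpan R L s)) (h : ∀ x (hx : x ∈ s), ⟨x, subset_lieSpan hx⟩ ∈ T) :
    T = ⊤ := by
  have hle : lieSpan R L s ≤ T.map (lieSpan R L s).incl :=
    lieSpan_le.mpr fun x hx => ⟨_, h x hx, rfl⟩
  refine eq_top_iff.mpr fun z _ => ?_
  obtain ⟨w, hw, hwz⟩ := hle z.2
  rwa [← Subtype.ext hwz]

end LieSubmodule

theorem LieIdealAb.lie_eq_zero_of_mem {R L : Type*} [CommRing R] [LieRing L] [LieAlgebra R L]
    (I : LieIdeal R L) {a : L} (ha : a ∈ I) (q : LieIdealAb R L I) : ⁅a, q⁆ = 0 := by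
  obtain ⟨z, rfl⟩ := LieSubmodule.Quotient.surjective_mk' _ q
  rw [← LieModuleHom.map_lie, LieSubmodule.Quotient.mk'_apply,
    LieSubmodule.Quotient.mk_eq_zero']
  exact subset_lieSpan ⟨⟨a, ha⟩, z, rfl⟩

-- A `def` rather than an `abbrev`, so that the zero bracket does not become an instance on `M`.
def AbelianLie (M : Type*) : Type _ := M

namespace AbelianLie

variable (R M : Type*) [CommRing R] [AddCommGroup M] [Module R M]

instance : AddCommGroup (AbelianLie M) := inferInstanceAs (AddCommGroup M)

instance : Module R (AbelianLie M) := inferInstanceAs (Module R M)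

instance : LieRing (AbelianLie M) where
  bracket _ _ := 0
  add_lie _ _ _ := (add_zero 0).symm
  lie_add _ _ _ := (add_zero 0).symm
  lie_self _ := rfl
  leibniz_lie _ _ _ := (add_zero 0).symm

instance : LieAlgebra R (AbelianLie M) where
  lie_smul _ _ _ := (smul_zero _).symm

def of : M ≃ₗ[R] AbelianLie M := LinearEquiv.refl R M

variable {R M}

@[simp] theorem lie_def (x y : AbelianLie M) : ⁅x, y⁆ = 0 := rfl

def derivation (f : Module.End R M) : LieDerivation R (AbelianLie M) (AbelianLie M) where
  toLinearMap := f
  leibniz' _ _ := by simp only [lie_def, sub_self]; exact map_zero f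

@[simp] theorem derivation_of (f : Module.End R M) (m : M) :
    derivation f (of R M m) = of R M (f m) := rfl

end AbelianLie

open LieAlgebra.SemiDirectSum

namespace LazardElimination

variable (K : Type*) [CommRing K] {X : Type*} (S : Set X)

abbrev WordModule := AbelianLie ((List S × ↥Sᶜ) →₀ K)

noncomputable def prepend (s : S) : Module.End K ((List S × ↥Sᶜ) →₀ K) :=
  Finsupp.lmapDomain K K fun p => (s :: p.1, p.2)

noncomputable def prependAction :
    FreeLieAlgebra K S →ₗ⁅K⁆ LieDerivation K (WordModule K S) (WordModule K S) :=
  FreeLieAlgebra.lift K fun s => AbelianLie.derivation (prepend K S s)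

open Classical in
noncomputable def eliminate :
    FreeLieAlgebra K X →ₗ⁅K⁆ WordModule K S ⋊⁅prependAction K S⁆ FreeLieAlgebra K S :=
  FreeLieAlgebra.lift K fun x =>
    if h : x ∈ S then ⟨0, FreeLieAlgebra.of K ⟨x, h⟩⟩
    else ⟨AbelianLie.of K _ (Finsupp.single ([], ⟨x, h⟩) 1), 0⟩

theorem eliminate_of_mem {x : X} (h : x ∈ S) :
    eliminate K S (FreeLieAlgebra.of K x) = ⟨0, FreeLieAlgebra.of K ⟨x, h⟩⟩ := by
  simp [eliminate, h]

theorem eliminate_of_notMem {x : X} (h : x ∉ S) :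
    eliminate K S (FreeLieAlgebra.of K x) =
      ⟨AbelianLie.of K _ (Finsupp.single ([], ⟨x, h⟩) 1), 0⟩ := by
  simp [eliminate, h]

theorem genIdeal_le_ker : genIdeal K X S ≤ ((projr _).comp (eliminate K S)).ker :=
  lieSpan_le.mpr <| by
    rintro _ ⟨x, hx, rfl⟩
    simp [eliminate_of_notMem K S hx]

theorem eliminate_iterBracket (p : List S × ↥Sᶜ) :
    eliminate K S (iterBracket K X S p) = ⟨AbelianLie.of K _ (Finsupp.single p 1), 0⟩ := by
  obtain ⟨w, x⟩ := p
  induction w with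
  | nil => exact eliminate_of_notMem K S x.2
  | cons s w ih =>
    change eliminate K S ⁅FreeLieAlgebra.of K (s : X), (iterBracket K X S (w, x) : _)⁆ = _
    rw [LieHom.map_lie, ih, eliminate_of_mem K S s.2, lie_eq_mk]
    ext <;> simp [prependAction, prepend]

theorem derivedLieSubmodule_le_comap_ker :
    derivedLieSubmodule K (FreeLieAlgebra K X) (genIdeal K X S) ≤
      LieSubmodule.comap (LieSubmodule.incl (genIdeal K X S)) (eliminate K S).ker := by
  refine lieSpan_le.mpr ?_
  rintro z ⟨x, y, hz⟩
  have hx := genIdeal_le_ker K S x.2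
  have hy := genIdeal_le_ker K S y.2
  simp only [LieHom.mem_ker, LieHom.comp_apply, projr_mk] at hx hy
  simp [hz, hx, hy]

noncomputable def abelianizationMap :
    LieIdealAb K (FreeLieAlgebra K X) (genIdeal K X S) →ₗ[K] (List S × ↥Sᶜ) →₀ K :=
  (derivedLieSubmodule K (FreeLieAlgebra K X) (genIdeal K X S)).toSubmodule.liftQ
    ((AbelianLie.of K _).symm.toLinearMap ∘ₗ projl _ ∘ₗ (eliminate K S).toLinearMap ∘ₗ
      (genIdeal K X S).toSubmodule.subtype)
    fun z hz => by
      have hz' : eliminate K S z = 0 := derivedLieSubmodule_le_comap_ker K S hz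
      change (AbelianLie.of K _).symm (eliminate K S z).left = 0
      rw [hz']
      rfl

noncomputable def bracketClass (p : List S × ↥Sᶜ) :
    LieIdealAb K (FreeLieAlgebra K X) (genIdeal K X S) :=
  LieSubmodule.Quotient.mk (iterBracket K X S p)

theorem abelianizationMap_bracketClass (p : List S × ↥Sᶜ) :
    abelianizationMap K S (bracketClass K S p) = Finsupp.single p 1 := by
  change (AbelianLie.of K _).symm (eliminate K S (iterBracket K X S p)).left = _
  simp [eliminate_iterBracket]

theorem linearIndependent_bracketClass : LinearIndependent K (bracketClass K S) := by
  refine LinearIndependent.of_comp (abelianizationMap K S) ?_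
  simp only [Function.comp_def, abelianizationMap_bracketClass]
  exact Finsupp.linearIndependent_single_one K _

theorem lie_of_bracketClass (s : S) (p : List S × ↥Sᶜ) :
    ⁅FreeLieAlgebra.of K (s : X), bracketClass K S p⁆ = bracketClass K S (s :: p.1, p.2) := by
  rw [bracketClass, ← LieSubmodule.Quotient.mk'_apply, ← LieModuleHom.map_lie]
  rfl

theorem span_bracketClass_eq_top : Submodule.span K (Set.range (bracketClass K S)) = ⊤ := by
  set P := Submodule.span K (Set.range (bracketClass K S))
  have hstable : ∀ x : X, ∀ m ∈ P, ⁅FreeLieAlgebra.of K x, m⁆ ∈ P := by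
    intro x
    by_cases hx : x ∈ S
    · refine (Submodule.span_le
        (p := P.comap (LieModule.toEnd K _ _ (FreeLieAlgebra.of K x)))).mpr ?_
      rintro _ ⟨p, rfl⟩
      exact Submodule.subset_span ⟨(⟨x, hx⟩ :: p.1, p.2), (lie_of_bracketClass K S ⟨x, hx⟩ p).symm⟩
    · intro m _
      rw [LieIdealAb.lie_eq_zero_of_mem (genIdeal K X S) (subset_lieSpan ⟨x, hx, rfl⟩)]
      exact P.zero_mem
  let P' : LieSubmodule K (FreeLieAlgebra K X)
      (LieIdealAb K (FreeLieAlgebra K X) (genIdeal K X S)) :=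
    { P with lie_mem := fun {a m} => FreeLieAlgebra.lie_mem_of_forall_of_lie_mem hstable a m }
  have htop : P'.comap (LieSubmodule.Quotient.mk' _) = ⊤ := by
    refine LieSubmodule.eq_top_of_forall_mem_lieSpan_generators _ ?_
    rintro _ ⟨x, hx, rfl⟩
    exact Submodule.subset_span ⟨([], ⟨x, hx⟩), rfl⟩
  refine eq_top_iff.mpr fun q _ => ?_
  obtain ⟨z, rfl⟩ := LieSubmodule.Quotient.surjective_mk' _ q
  exact (htop ▸ LieSubmodule.mem_top z : z ∈ P'.comap _)

end LazardElimination

/-- Let `𝔰` be the Lie ideal of the free Lie algebra over `K` on `X` generated by the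
generators indexed by `X − S`.  Then the abelianization `𝔰/[𝔰,𝔰]` is a free module over the
enveloping algebra `W` of the free Lie algebra on `S` with basis the images of the `ξ_x`,
`x ∈ X − S`; equivalently, the images in `𝔰/[𝔰,𝔰]` of the iterated brackets
`[ξ_{s₁},[…,[ξ_{s_k}, ξ_x]…]]`, indexed by words in `S` and elements `x ∈ X − S`, form a
`K`-basis of `𝔰/[𝔰,𝔰]`. -/
theorem elimination_corollary (K : Type*) [CommRing K] (X : Type*) (S : Set X) :
    ∃ b : Module.Basis ((List ↥S) × ↥(Sᶜ)) K
        (LieIdealAb K (FreeLieAlgebra K X) (genIdeal K X S)),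
      ∀ p : (List ↥S) × ↥(Sᶜ),
        b p = LieSubmodule.Quotient.mk (iterBracket K X S p) :=
  ⟨.mk (LazardElimination.linearIndependent_bracketClass K S)
      (LazardElimination.span_bracketClass_eq_top K S).ge,
    fun _ => Module.Basis.mk_apply _ _ _⟩
end

section
/- Let K be a commutative ring and m ≥ 2 an integer. In the free Lie algebra over K on generators ξ₁,…,ξ_m, the path sequence ρ₁ = [ξ₁,ξ₂], ρ₂ = [ξ₂,ξ₃], …, ρ_{m−1} = [ξ_{m−1},ξ_m] is strongly free. -/
open LieSubmodule

section StronglyFree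

attribute [local instance 100] LieRing.ofAssociativeRing

variable (K : Type*) [CommRing K] (L : Type*) [LieRing L] [LieAlgebra K L]

theorem lie_mk_eq_zero (I : LieIdeal K L) {x : L} (hx : x ∈ I) (m : I) :
    ⁅x, (LieSubmodule.Quotient.mk (N := derivedLieSubmodule K L I) m)⁆ = 0 := by
  have : ⁅x, (LieSubmodule.Quotient.mk (N := derivedLieSubmodule K L I) m)⁆
      = LieSubmodule.Quotient.mk (N := derivedLieSubmodule K L I) ⁅x, m⁆ := rfl
  rw [this, LieSubmodule.Quotient.mk_eq_zero']
  exact subset_lieSpan ⟨⟨x, hx⟩, m, rfl⟩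

/-- The action of the quotient Lie algebra `L ⧸ I` on the abelianization `I/[I,I]`. -/
noncomputable def abelianizationAction (I : LieIdeal K L) :
    (L ⧸ I) →ₗ⁅K⁆ Module.End K (LieIdealAb K L I) :=
  { (Submodule.liftQ I.toSubmodule
      (LieModule.toEnd K L (LieIdealAb K L I)).toLinearMap (by
        intro x hx
        ext m
        induction m using Quotient.inductionOn' with
        | h m =>
          exact lie_mk_eq_zero K L I hx m)) with
    map_lie' := by
      intro x y
      induction x using Quotient.inductionOn' with
      | h x =>
      induction y using Quotient.inductionOn' with
      | h y =>
        have hx : (Quotient.mk'' x : L ⧸ I) = LieSubmodule.Quotient.mk (N := I) x := rfl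
        have hy : (Quotient.mk'' y : L ⧸ I) = LieSubmodule.Quotient.mk (N := I) y := rfl
        simp only [hx, hy, ← LieSubmodule.Quotient.mk_bracket]
        change (LieModule.toEnd K L (LieIdealAb K L I)) ⁅x, y⁆
          = ⁅(LieModule.toEnd K L (LieIdealAb K L I)) x,
              (LieModule.toEnd K L (LieIdealAb K L I)) y⁆
        exact LieHom.map_lie _ x y }

/-- `I/[I,I]` as a module over the universal enveloping algebra of `L ⧸ I`. -/
noncomputable instance lieIdealAbModule (I : LieIdeal K L) :
    Module (UniversalEnvelopingAlgebra K (L ⧸ I)) (LieIdealAb K L I) :=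
  Module.compHom (LieIdealAb K L I)
    (UniversalEnvelopingAlgebra.lift K (abelianizationAction K L I) :
      UniversalEnvelopingAlgebra K (L ⧸ I) →ₐ[K]
        Module.End K (LieIdealAb K L I)).toRingHom

/-- A family `ρ` of elements of a Lie algebra `L` over `K` is *strongly free* if,
denoting by `𝔯` the Lie ideal generated by the `ρ i`, by `𝔤 = L ⧸ 𝔯` and by `U𝔤` the
universal enveloping algebra of `𝔤`, the `K`-module `U𝔤` is torsion free and the
abelianization `𝔯/[𝔯,𝔯]` is a free `U𝔤`-module with basis the images of the `ρ i`. -/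
def IsStronglyFree {ι : Type*} (ρ : ι → L) : Prop :=
  Submodule.torsion K (UniversalEnvelopingAlgebra K (L ⧸ lieSpan K L (Set.range ρ))) = ⊥ ∧
  ∃ b : Module.Basis ι (UniversalEnvelopingAlgebra K (L ⧸ lieSpan K L (Set.range ρ)))
      (LieIdealAb K L (lieSpan K L (Set.range ρ))),
    ∀ i, b i = LieSubmodule.Quotient.mk
      (⟨ρ i, subset_lieSpan (Set.mem_range_self i)⟩ : lieSpan K L (Set.range ρ))

end StronglyFree

/-!
Write `U` for the enveloping algebra of `𝔤 = L ⧸ 𝔯`. Sending `ξᵢ` to the generator `i` of the trace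
monoid in which `i` and `i + 1` commute gives an algebra map from `U` to the trace monoid algebra,
with a left inverse coming from the universal properties. So `U` is `K`-torsion-free, and every
`ξᵢ` is right regular in `U`, since trace monoids are right cancellative (two words are equivalent
iff all their projections onto pairs of non-commuting letters agree).

The Fox derivative `D : L → ⊕ᵢ U eᵢ`, with `D ξᵢ = eᵢ` and `D ⁅x, y⁆ = x • D y - y • D x`, vanishes
on `[𝔯, 𝔯]` and descends to a `U`-linear map on `𝔯/[𝔯,𝔯]` sending `ρₖ` to
`ξₖ eₖ₊₁ - ξₖ₊₁ eₖ`. These vectors are `U`-linearly independent: looking at the coordinate `eₖ`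
peels off the coefficients one at a time, using right regularity of `ξₖ₊₁`. Hence the surjection
`U^(m-1) → 𝔯/[𝔯,𝔯]`, `eₖ ↦ ρₖ`, is injective.
-/

attribute [local instance 100] LieRing.ofAssociativeRing

namespace UniversalEnvelopingAlgebra

variable {R L : Type*} [CommRing R] [LieRing L] [LieAlgebra R L]

@[elab_as_elim]
theorem induction {p : UniversalEnvelopingAlgebra R L → Prop}
    (algebraMap : ∀ r, p (algebraMap R _ r)) (ι : ∀ x, p (ι R x))
    (mul : ∀ a b, p a → p b → p (a * b)) (add : ∀ a b, p a → p b → p (a + b))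
    (u : UniversalEnvelopingAlgebra R L) : p u := by
  obtain ⟨t, rfl⟩ := RingCon.mkₐ_surjective (α := R) (ringCon R L) u
  induction t using TensorAlgebra.induction with
  | algebraMap r => exact (mkAlgHom R L).commutes r ▸ algebraMap r
  | ι x => exact ι x
  | mul a b ha hb => exact (map_mul (mkAlgHom R L) a b) ▸ mul _ _ ha hb
  | add a b ha hb => exact (map_add (mkAlgHom R L) a b) ▸ add _ _ ha hb

end UniversalEnvelopingAlgebra

namespace LieIdeal

variable {K L L' : Type*} [CommRing K] [LieRing L] [LieAlgebra K L] [LieRing L'] [LieAlgebra K L']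
  (I : LieIdeal K L)

noncomputable def toQuotient : L →ₗ⁅K⁆ L ⧸ I :=
  { I.toSubmodule.mkQ with map_lie' := fun {x y} => LieSubmodule.Quotient.mk_bracket I x y }

@[simp]
lemma toQuotient_apply (x : L) : I.toQuotient x = LieSubmodule.Quotient.mk x := rfl

lemma toQuotient_surjective : Function.Surjective I.toQuotient :=
  LieSubmodule.Quotient.surjective_mk' I

noncomputable def quotientLift (f : L →ₗ⁅K⁆ L') (hf : I ≤ f.ker) : L ⧸ I →ₗ⁅K⁆ L' :=
  { I.toSubmodule.liftQ f.toLinearMap fun x hx => LieHom.mem_ker.mp (hf hx) with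
    map_lie' := fun {x y} => by
      obtain ⟨x, rfl⟩ := I.toQuotient_surjective x
      obtain ⟨y, rfl⟩ := I.toQuotient_surjective y
      exact f.map_lie x y }

@[simp]
lemma quotientLift_toQuotient (f : L →ₗ⁅K⁆ L') (hf : I ≤ f.ker) (x : L) :
    I.quotientLift f hf (I.toQuotient x) = f x := rfl

noncomputable def envι : L →ₗ⁅K⁆ UniversalEnvelopingAlgebra K (L ⧸ I) :=
  (UniversalEnvelopingAlgebra.ι K).comp I.toQuotient

lemma envι_eq_zero {x : L} (hx : x ∈ I) : I.envι x = 0 := by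
  rw [envι, LieHom.comp_apply, toQuotient_apply, (LieSubmodule.Quotient.mk_eq_zero').mpr hx,
    map_zero]

end LieIdeal

namespace LieIdealAb

variable {K L : Type*} [CommRing K] [LieRing L] [LieAlgebra K L] (I : LieIdeal K L)

noncomputable def mk : I →ₗ[K] LieIdealAb K L I := (derivedLieSubmodule K L I).toSubmodule.mkQ

lemma mk_surjective : Function.Surjective (mk I) := Submodule.mkQ_surjective _

lemma smul_def (u : UniversalEnvelopingAlgebra K (L ⧸ I)) (ξ : LieIdealAb K L I) :
    u • ξ = UniversalEnvelopingAlgebra.lift K (abelianizationAction K L I) u ξ := rfl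

lemma envι_smul_mk (x : L) (r : I) : I.envι x • mk I r = mk I ⁅x, r⁆ := by
  rw [smul_def, LieIdeal.envι, LieHom.comp_apply, UniversalEnvelopingAlgebra.lift_ι_apply]
  rfl

instance : IsScalarTower K (UniversalEnvelopingAlgebra K (L ⧸ I)) (LieIdealAb K L I) :=
  ⟨fun c u ξ => by rw [smul_def, smul_def, map_smul]; rfl⟩

variable {M : Type*} [AddCommGroup M] [Module (UniversalEnvelopingAlgebra K (L ⧸ I)) M]
  [Module K M] (D : L →ₗ[K] M)

lemma apply_eq_zero_of_mem_derivedLieSubmodule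
    (hD : ∀ x y, D ⁅x, y⁆ = I.envι x • D y - I.envι y • D x) {z : I}
    (hz : z ∈ derivedLieSubmodule K L I) : D z = 0 := by
  induction hz using LieSubmodule.lieSpan_induction with
  | mem z hz =>
    obtain ⟨x, y, hz⟩ := hz
    rw [hz, hD, I.envι_eq_zero x.2, I.envι_eq_zero y.2, zero_smul, zero_smul, sub_zero]
  | zero => simp
  | add z w _ _ hz hw => simp [hz, hw]
  | smul c z _ hz => simp [hz]
  | lie x z _ hz =>
    rw [LieSubmodule.coe_bracket, hD, hz, I.envι_eq_zero z.2, smul_zero, zero_smul, sub_zero]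

variable (hD : ∀ x y, D ⁅x, y⁆ = I.envι x • D y - I.envι y • D x)

noncomputable def liftₗ : LieIdealAb K L I →ₗ[K] M :=
  (derivedLieSubmodule K L I).toSubmodule.liftQ (D ∘ₗ I.toSubmodule.subtype)
    fun _ hz => apply_eq_zero_of_mem_derivedLieSubmodule I D hD hz

lemma liftₗ_mk (r : I) : liftₗ I D hD (mk I r) = D r := rfl

variable [IsScalarTower K (UniversalEnvelopingAlgebra K (L ⧸ I)) M]

lemma liftₗ_smul (u : UniversalEnvelopingAlgebra K (L ⧸ I)) (ξ : LieIdealAb K L I) :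
    liftₗ I D hD (u • ξ) = u • liftₗ I D hD ξ := by
  induction u using UniversalEnvelopingAlgebra.induction generalizing ξ with
  | algebraMap c => rw [algebraMap_smul, map_smul, algebraMap_smul]
  | ι x =>
    obtain ⟨x, rfl⟩ := I.toQuotient_surjective x
    obtain ⟨r, rfl⟩ := mk_surjective I ξ
    rw [← LieHom.comp_apply, ← LieIdeal.envι, envι_smul_mk, liftₗ_mk, liftₗ_mk,
      LieSubmodule.coe_bracket, hD, I.envι_eq_zero r.2, zero_smul, sub_zero]
  | mul a b ha hb => rw [mul_smul, ha, hb, mul_smul]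
  | add a b ha hb => rw [add_smul, map_add, ha, hb, add_smul]

noncomputable def lift : LieIdealAb K L I →ₗ[UniversalEnvelopingAlgebra K (L ⧸ I)] M :=
  { liftₗ I D hD with map_smul' := liftₗ_smul I D hD }

lemma lift_mk (r : I) : lift I D hD (mk I r) = D r := rfl

end LieIdealAb

section StronglyFreeCriterion

variable {K L ι : Type*} [CommRing K] [LieRing L] [LieAlgebra K L] (ρ : ι → L)

local notation "𝔯" => lieSpan K L (Set.range ρ)
local notation "𝔘" => UniversalEnvelopingAlgebra K (L ⧸ 𝔯)

variable (K) in
noncomputable def relatorMap : (ι →₀ 𝔘) →ₗ[𝔘] LieIdealAb K L 𝔯 :=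
  Finsupp.linearCombination _ fun i => LieIdealAb.mk _ ⟨ρ i, subset_lieSpan (Set.mem_range_self i)⟩

variable (K) in
lemma relatorMap_surjective : Function.Surjective (relatorMap K ρ) := by
  suffices h : ∀ r (hr : r ∈ 𝔯), LieIdealAb.mk _ ⟨r, hr⟩ ∈ LinearMap.range (relatorMap K ρ) by
    intro ξ
    obtain ⟨⟨r, hr⟩, rfl⟩ := LieIdealAb.mk_surjective _ ξ
    exact h r hr
  intro r hr
  induction hr using LieSubmodule.lieSpan_induction with
  | mem r hr =>
    obtain ⟨i, rfl⟩ := hr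
    exact ⟨Finsupp.single i 1, by simp [relatorMap]⟩
  | zero => exact zero_mem _
  | add r s _ _ hr hs => exact add_mem hr hs
  | smul c r hr' hr =>
    change LieIdealAb.mk _ (c • ⟨r, hr'⟩) ∈ _
    rw [map_smul, ← algebraMap_smul 𝔘]
    exact Submodule.smul_mem _ _ hr
  | lie x r hr' hr =>
    change LieIdealAb.mk _ ⁅x, (⟨r, hr'⟩ : 𝔯)⁆ ∈ _
    rw [← LieIdealAb.envι_smul_mk]
    exact Submodule.smul_mem _ _ hr

theorem isStronglyFree_of_linearIndependent (htors : Submodule.torsion K 𝔘 = ⊥)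
    {M : Type*} [AddCommGroup M] [Module 𝔘 M] [Module K M] [IsScalarTower K 𝔘 M]
    (D : L →ₗ[K] M) (hD : ∀ x y, D ⁅x, y⁆ = LieIdeal.envι 𝔯 x • D y - LieIdeal.envι 𝔯 y • D x)
    (hind : LinearIndependent 𝔘 (D ∘ ρ)) :
    IsStronglyFree K L ρ := by
  have hcomp : LieIdealAb.lift _ D hD ∘ₗ relatorMap K ρ = Finsupp.linearCombination _ (D ∘ ρ) := by
    ext i
    simp [relatorMap, LieIdealAb.lift_mk]
  have hinj : Function.Injective (relatorMap K ρ) :=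
    .of_comp (f := LieIdealAb.lift _ D hD) (by rw [← LinearMap.coe_comp, hcomp]; exact hind)
  refine ⟨htors, .ofRepr (LinearEquiv.ofBijective _ ⟨hinj, relatorMap_surjective K ρ⟩).symm,
    fun i => ?_⟩
  simp only [relatorMap, Module.Basis.coe_ofRepr, LinearEquiv.symm_symm,
    LinearEquiv.ofBijective_apply, Finsupp.linearCombination_single, one_smul]
  rfl

end StronglyFreeCriterion

section FoxDerivative

variable {K A : Type*} [CommRing K] [Ring A] [Algebra K A]

/-- `M` with the right `A`-action through `ε`: in the square-zero extension `A ⊕ M` the second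
component of a Lie map out of a free Lie algebra is then a Fox derivative. -/
def AugmentedBimodule (_ε : A →ₐ[K] K) (M : Type*) : Type _ := M

variable (ε : A →ₐ[K] K) {M : Type*} [AddCommGroup M] [Module K M]

namespace AugmentedBimodule

instance : AddCommGroup (AugmentedBimodule ε M) := ‹AddCommGroup M›
instance : Module K (AugmentedBimodule ε M) := ‹Module K M›

instance : Module Aᵐᵒᵖ (AugmentedBimodule ε M) :=
  Module.compHom M ((ε : A →+* K).fromOpposite fun _ _ => Commute.all _ _)

lemma op_smul_def (a : Aᵐᵒᵖ) (m : AugmentedBimodule ε M) :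
    a • m = (ε a.unop • m : M) := rfl

instance : IsScalarTower K Aᵐᵒᵖ (AugmentedBimodule ε M) :=
  ⟨fun k b m => by
    show ε (MulOpposite.unop (k • b)) • (m : M) = k • ε b.unop • (m : M)
    rw [MulOpposite.unop_smul, map_smul, smul_eq_mul, mul_smul]⟩

variable [Module A M] [IsScalarTower K A M]

instance : Module A (AugmentedBimodule ε M) := ‹Module A M›
instance : IsScalarTower K A (AugmentedBimodule ε M) := ‹IsScalarTower K A M›

instance : SMulCommClass A Aᵐᵒᵖ (AugmentedBimodule ε M) :=
  ⟨fun a b m => (smul_comm (ε b.unop) a (m : M)).symm⟩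

end AugmentedBimodule

variable [Module A M] [IsScalarTower K A M]

variable {X : Type*} (π : FreeLieAlgebra K X →ₗ⁅K⁆ A) (f : X → M)

noncomputable def foxLift : FreeLieAlgebra K X →ₗ⁅K⁆ TrivSqZeroExt A (AugmentedBimodule ε M) :=
  FreeLieAlgebra.lift K fun i => .inl (π (.of K i)) + .inr (f i)

lemma foxLift_of (i : X) : foxLift ε π f (.of K i) = .inl (π (.of K i)) + .inr (f i) :=
  FreeLieAlgebra.lift_of_apply _ i

lemma fst_foxLift (x : FreeLieAlgebra K X) : (foxLift ε π f x).fst = π x := by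
  have h : ((TrivSqZeroExt.fstHom K A (AugmentedBimodule ε M)).toLieHom.comp
      (foxLift ε π f) : _ →ₗ⁅K⁆ A) = π :=
    FreeLieAlgebra.hom_ext fun i =>
      (congrArg TrivSqZeroExt.fst (foxLift_of ε π f i)).trans (add_zero _)
  exact LieHom.congr_fun h x

noncomputable def foxDerivative : FreeLieAlgebra K X →ₗ[K] M :=
  ((TrivSqZeroExt.sndHom A (AugmentedBimodule ε M)).restrictScalars K).comp
    (foxLift ε π f).toLinearMap

lemma foxDerivative_apply (x : FreeLieAlgebra K X) :
    foxDerivative ε π f x = (foxLift ε π f x).snd := rfl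

lemma foxDerivative_of (i : X) : foxDerivative ε π f (.of K i) = f i :=
  (congrArg TrivSqZeroExt.snd (foxLift_of ε π f i)).trans (zero_add _)

lemma foxDerivative_lie (hπ : ∀ x, ε (π x) = 0) (x y : FreeLieAlgebra K X) :
    foxDerivative ε π f ⁅x, y⁆ = π x • foxDerivative ε π f y - π y • foxDerivative ε π f x := by
  simp only [foxDerivative_apply, LieHom.map_lie, Ring.lie_def, TrivSqZeroExt.snd_sub,
    TrivSqZeroExt.snd_mul, fst_foxLift, AugmentedBimodule.op_smul_def, MulOpposite.unop_op, hπ,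
    zero_smul, add_zero]
  rfl

end FoxDerivative

lemma IsRightRegular.of_map {R S F : Type*} [Mul R] [Mul S] [FunLike F R S] [MulHomClass F R S]
    (f : F) (hf : Function.Injective f) {a : R} (h : IsRightRegular (f a)) : IsRightRegular a :=
  fun x y hxy => hf (h (by simpa only [map_mul] using congrArg f hxy))

namespace MonoidAlgebra

variable {R M : Type*} [CommRing R]

lemma isRightRegular_single_one [Monoid M] {m : M} (hm : IsRightRegular m) :
    IsRightRegular (single m (1 : R)) := by
  intro x y hxy
  ext m'
  have h := congrArg (fun z : MonoidAlgebra R M => z.coeff (m' * m)) hxy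
  simpa [coeff_mul_single_eq_coeff_mul m', hm.eq_iff] using h

lemma torsion_eq_bot : Submodule.torsion R (MonoidAlgebra R M) = ⊥ := by
  refine (Submodule.eq_bot_iff _).mpr fun x hx => ?_
  obtain ⟨c, hc⟩ := (Submodule.mem_torsion_iff x).mp hx
  ext m
  have hcm : c • x.coeff m = 0 := by simpa using congrArg (fun z => z.coeff m) hc
  exact c.2.2 _ (by rwa [mul_comm, ← smul_eq_mul])

end MonoidAlgebra

lemma Submodule.torsion_eq_bot_of_injective {R M N : Type*} [CommRing R] [AddCommGroup M]
    [Module R M] [AddCommGroup N] [Module R N] (f : M →ₗ[R] N) (hf : Function.Injective f)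
    (hN : torsion R N = ⊥) : torsion R M = ⊥ := by
  refine (Submodule.eq_bot_iff _).mpr fun x hx => hf ?_
  obtain ⟨c, hc⟩ := (Submodule.mem_torsion_iff x).mp hx
  rw [map_zero]
  have : f x ∈ torsion R N := (Submodule.mem_torsion_iff _).mpr
    ⟨c, by rw [Submonoid.smul_def] at hc ⊢; rw [← map_smul, hc, map_zero]⟩
  simpa [hN] using this

namespace TraceMonoid

variable {α : Type*} (G : SimpleGraph α)

def SwapRel (u v : FreeMonoid α) : Prop :=
  ∃ i j, G.Adj i j ∧ u = .of i * .of j ∧ v = .of j * .of i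

abbrev con : Con (FreeMonoid α) := conGen (SwapRel G)

end TraceMonoid

abbrev TraceMonoid {α : Type*} (G : SimpleGraph α) : Type _ := (TraceMonoid.con G).Quotient

namespace TraceMonoid

variable {α : Type*} {G : SimpleGraph α}

variable (G) in
def of (i : α) : TraceMonoid G := (FreeMonoid.of i : FreeMonoid α)

lemma of_mul_of_comm {i j : α} (h : G.Adj i j) : of G i * of G j = of G j * of G i :=
  (Con.eq _).mpr (ConGen.Rel.of _ _ ⟨i, j, h, rfl, rfl⟩)

lemma filter_eq_of_con {u v : FreeMonoid α} (h : con G u v) {p : α → Bool}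
    (hp : ∀ i j, G.Adj i j → p i → p j → False) :
    u.toList.filter p = v.toList.filter p := by
  induction h with
  | of u v huv =>
    obtain ⟨i, j, hij, rfl, rfl⟩ := huv
    cases hi : p i <;> cases hj : p j
    case true.true => exact (hp i j hij hi hj).elim
    all_goals simp [hi, hj]
  | refl => rfl
  | symm _ ih => exact ih.symm
  | trans _ _ ih₁ ih₂ => exact ih₁.trans ih₂
  | mul _ _ ih₁ ih₂ => simp only [FreeMonoid.toList_mul, List.filter_append, ih₁, ih₂]

lemma con_cons_append_of_forall_adj {a : α} {w : List α} (hw : ∀ b ∈ w, G.Adj b a) (w' : List α) :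
    con G (.ofList (w ++ a :: w')) (.ofList (a :: (w ++ w'))) := by
  induction w with
  | nil => exact (con G).refl _
  | cons b w ih =>
    have hba : con G (.of b * .of a) (.of a * .of b) :=
      ConGen.Rel.of _ _ ⟨b, a, hw b List.mem_cons_self, rfl, rfl⟩
    have hmove := (con G).mul ((con G).refl (.of b))
      (ih fun c hc => hw c (List.mem_cons_of_mem b hc))
    have hswap := (con G).mul hba ((con G).refl (.ofList (w ++ w')))
    simp only [FreeMonoid.ofList_cons, FreeMonoid.ofList_append, mul_assoc] at hmove hswap ⊢
    exact hmove.trans hswap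

lemma filter_pair_eq_of_con [DecidableEq α] {u v : FreeMonoid α} (h : con G u v) {i j : α}
    (hij : ¬ G.Adj i j) :
    u.toList.filter (fun x => x = i ∨ x = j) = v.toList.filter (fun x => x = i ∨ x = j) :=
  filter_eq_of_con h fun a b hab ha hb => by
    simp only [decide_eq_true_eq] at ha hb
    rcases ha with rfl | rfl <;> rcases hb with rfl | rfl
    exacts [G.irrefl hab, hij hab, hij hab.symm, G.irrefl hab]

theorem con_ofList_of_filter_eq [DecidableEq α] {u v : List α}
    (h : ∀ i j, ¬ G.Adj i j →
      u.filter (fun x => x = i ∨ x = j) = v.filter (fun x => x = i ∨ x = j)) :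
    con G (.ofList u) (.ofList v) := by
  induction u generalizing v with
  | nil =>
    cases v with
    | nil => exact (con G).refl _
    | cons a v => simpa using h a a G.irrefl
  | cons a u ih =>
    -- `a` occurs in `v`, and every letter `b` before its first occurrence commutes with it
    -- (otherwise the projections onto `{a, b}` would start differently), so `a` can be moved
    -- to the front of `v`.
    have ha : a ∈ v := by
      have : a ∈ v.filter (fun x => x = a ∨ x = a) := h a a G.irrefl ▸ by simp
      exact List.mem_of_mem_filter this
    obtain ⟨w, w', rfl, haw⟩ := List.eq_append_cons_of_mem ha
    have hadj : ∀ b ∈ w, G.Adj b a := by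
      intro b hb
      by_contra hab
      have hfilter := h a b fun h => hab h.symm
      cases hw : w.filter (fun x => x = a ∨ x = b) with
      | nil =>
        simp only [List.filter_eq_nil_iff, decide_eq_true_eq, not_or] at hw
        exact (hw b hb).2 rfl
      | cons c t =>
        have hc : c ∈ w := List.mem_of_mem_filter (hw ▸ List.mem_cons_self)
        rw [List.filter_append, hw, List.filter_cons_of_pos (by simp)] at hfilter
        obtain rfl : a = c := List.head_eq_of_cons_eq hfilter
        exact haw hc
    have hmove := con_cons_append_of_forall_adj hadj w'
    have htail : con G (.ofList u) (.ofList (w ++ w')) := by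
      refine ih fun i j hij => ?_
      have := (h i j hij).trans (filter_pair_eq_of_con hmove hij)
      by_cases hp : a = i ∨ a = j <;> simpa [List.filter_cons, hp] using this
    exact ((con G).mul ((con G).refl (.of a)) htail).trans ((con G).symm hmove)

theorem isRightRegular_of (i : α) : IsRightRegular (of G i) := by
  classical
  intro s t hst
  induction s using Con.induction_on with | H u =>
  induction t using Con.induction_on with | H v =>
  have h : con G (u * .of i) (v * .of i) := (Con.eq _).mp hst
  refine (Con.eq _).mpr ?_
  simpa using con_ofList_of_filter_eq (G := G) (u := u.toList) (v := v.toList) fun j k hjk => by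
    simpa using filter_pair_eq_of_con h hjk

end TraceMonoid

section GraphLieAlgebra

open FreeLieAlgebra

variable (K : Type*) [CommRing K] {X : Type*} (G : SimpleGraph X)

noncomputable def FreeLieAlgebra.toTraceAlgebra :
    FreeLieAlgebra K X →ₗ⁅K⁆ MonoidAlgebra K (TraceMonoid G) :=
  lift K fun i => .single (TraceMonoid.of G i) 1

variable {K G} (I : LieIdeal K (FreeLieAlgebra K X))

noncomputable def envelopingToTraceAlgebra (hI : I ≤ (toTraceAlgebra K G).ker) :
    UniversalEnvelopingAlgebra K (FreeLieAlgebra K X ⧸ I) →ₐ[K] MonoidAlgebra K (TraceMonoid G) :=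
  UniversalEnvelopingAlgebra.lift K (I.quotientLift _ hI)

lemma envelopingToTraceAlgebra_envι (hI : I ≤ (toTraceAlgebra K G).ker) (x : FreeLieAlgebra K X) :
    envelopingToTraceAlgebra I hI (I.envι x) = toTraceAlgebra K G x := by
  rw [envelopingToTraceAlgebra, LieIdeal.envι, LieHom.comp_apply,
    UniversalEnvelopingAlgebra.lift_ι_apply, LieIdeal.quotientLift_toQuotient]

lemma envι_of_commute (hG : ∀ i j, G.Adj i j → ⁅of K i, of K j⁆ ∈ I) {i j : X} (hij : G.Adj i j) :
    I.envι (of K i) * I.envι (of K j) = I.envι (of K j) * I.envι (of K i) := by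
  rw [← sub_eq_zero, ← Ring.lie_def, ← LieHom.map_lie, I.envι_eq_zero (hG i j hij)]

noncomputable def traceAlgebraToEnveloping (hG : ∀ i j, G.Adj i j → ⁅of K i, of K j⁆ ∈ I) :
    MonoidAlgebra K (TraceMonoid G) →ₐ[K] UniversalEnvelopingAlgebra K (FreeLieAlgebra K X ⧸ I) :=
  MonoidAlgebra.lift K _ _ <| Con.lift _ (FreeMonoid.lift fun i => I.envι (of K i)) <|
    Con.conGen_le.mpr fun _ _ ⟨i, j, hij, hu, hv⟩ => by
      simp only [Con.ker_rel, hu, hv, map_mul, FreeMonoid.lift_eval_of, envι_of_commute I hG hij]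

lemma traceAlgebraToEnveloping_single_of (hG : ∀ i j, G.Adj i j → ⁅of K i, of K j⁆ ∈ I) (i : X) :
    traceAlgebraToEnveloping I hG (.single (TraceMonoid.of G i) 1) = I.envι (of K i) := by
  simp [traceAlgebraToEnveloping, TraceMonoid.of]

lemma traceAlgebraToEnveloping_comp_envelopingToTraceAlgebra
    (hG : ∀ i j, G.Adj i j → ⁅of K i, of K j⁆ ∈ I) (hI : I ≤ (toTraceAlgebra K G).ker) :
    (traceAlgebraToEnveloping I hG).comp (envelopingToTraceAlgebra I hI) = AlgHom.id _ _ := by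
  have h : ((traceAlgebraToEnveloping I hG).comp (envelopingToTraceAlgebra I hI)).toLieHom.comp
      I.envι = I.envι := FreeLieAlgebra.hom_ext fun i => by
    simp [envelopingToTraceAlgebra_envι, toTraceAlgebra, traceAlgebraToEnveloping_single_of]
  apply UniversalEnvelopingAlgebra.hom_ext
  ext x
  obtain ⟨x, rfl⟩ := I.toQuotient_surjective x
  exact LieHom.congr_fun h x

lemma envelopingToTraceAlgebra_injective (hG : ∀ i j, G.Adj i j → ⁅of K i, of K j⁆ ∈ I)
    (hI : I ≤ (toTraceAlgebra K G).ker) : Function.Injective (envelopingToTraceAlgebra I hI) :=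
  Function.LeftInverse.injective (g := traceAlgebraToEnveloping I hG)
    (AlgHom.congr_fun (traceAlgebraToEnveloping_comp_envelopingToTraceAlgebra I hG hI))

lemma torsion_envelopingAlgebra_eq_bot (hG : ∀ i j, G.Adj i j → ⁅of K i, of K j⁆ ∈ I)
    (hI : I ≤ (toTraceAlgebra K G).ker) :
    Submodule.torsion K (UniversalEnvelopingAlgebra K (FreeLieAlgebra K X ⧸ I)) = ⊥ :=
  Submodule.torsion_eq_bot_of_injective (envelopingToTraceAlgebra I hI).toLinearMap
    (envelopingToTraceAlgebra_injective I hG hI) MonoidAlgebra.torsion_eq_bot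

lemma isRightRegular_envι_of (hG : ∀ i j, G.Adj i j → ⁅of K i, of K j⁆ ∈ I)
    (hI : I ≤ (toTraceAlgebra K G).ker) (i : X) : IsRightRegular (I.envι (of K i)) := by
  refine IsRightRegular.of_map _ (envelopingToTraceAlgebra_injective I hG hI) ?_
  rw [envelopingToTraceAlgebra_envι, toTraceAlgebra, lift_of_apply]
  exact MonoidAlgebra.isRightRegular_single_one (TraceMonoid.isRightRegular_of i)

end GraphLieAlgebra

lemma linearIndependent_path {A X : Type*} [Ring A] {n : ℕ} {e : Fin (n + 1) → X}
    (he : Function.Injective e) {g : X → A} (hg : ∀ k : Fin n, IsRightRegular (g (e k.succ))) :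
    LinearIndependent A fun k : Fin n =>
      Finsupp.single (e k.succ) (g (e k.castSucc)) -
        Finsupp.single (e k.castSucc) (g (e k.succ)) := by
  classical
  rw [linearIndependent_iff]
  intro l hl
  have hcoord (k : Fin n) :
      (∑ j, if j.succ = k.castSucc then l j * g (e j.castSucc) else 0) = l k * g (e k.succ) := by
    have := congrArg (· (e k.castSucc)) hl
    simpa [Finsupp.linearCombination_apply, Finsupp.sum_fintype, Finsupp.single_apply, he.eq_iff,
      mul_sub, sub_eq_zero] using this
  suffices h : ∀ t (k : Fin n), k.val = t → l k = 0 from Finsupp.ext fun k => h _ k rfl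
  intro t
  induction t using Nat.strong_induction_on with
  | _ t ih =>
    rintro k rfl
    refine hg k ?_
    simp only [zero_mul, ← hcoord k]
    refine Finset.sum_eq_zero fun j _ => ?_
    split_ifs with hj
    · have hjk : j.val + 1 = k.val := by simpa [Fin.ext_iff] using hj
      rw [ih j (by omega) j rfl, zero_mul]
    · rfl

section Path

open FreeLieAlgebra

variable {K X : Type*} [CommRing K] {n : ℕ} {e : Fin (n + 1) → X} {ρ : Fin n → FreeLieAlgebra K X}

variable (e) in
def SimpleGraph.ofPath : SimpleGraph X :=
  SimpleGraph.fromRel fun x y => ∃ k : Fin n, e k.castSucc = x ∧ e k.succ = y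

lemma lie_mem_lieSpan_of_ofPath_adj (hρ : ∀ k, ρ k = ⁅of K (e k.castSucc), of K (e k.succ)⁆) :
    ∀ i j, (SimpleGraph.ofPath e).Adj i j →
      ⁅of K i, of K j⁆ ∈ lieSpan K (FreeLieAlgebra K X) (Set.range ρ) := by
  rintro i j ⟨-, ⟨k, rfl, rfl⟩ | ⟨k, rfl, rfl⟩⟩
  · exact hρ k ▸ subset_lieSpan (Set.mem_range_self k)
  · rw [← lie_skew, neg_mem_iff]
    exact hρ k ▸ subset_lieSpan (Set.mem_range_self k)

lemma lieSpan_le_ker_toTraceAlgebra (he : Function.Injective e)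
    (hρ : ∀ k, ρ k = ⁅of K (e k.castSucc), of K (e k.succ)⁆) :
    lieSpan K (FreeLieAlgebra K X) (Set.range ρ) ≤
      (toTraceAlgebra K (SimpleGraph.ofPath e)).ker := by
  refine lieSpan_le.mpr ?_
  rintro _ ⟨k, rfl⟩
  have hadj : (SimpleGraph.ofPath e).Adj (e k.castSucc) (e k.succ) :=
    ⟨he.ne Fin.castSucc_lt_succ.ne, .inl ⟨k, rfl, rfl⟩⟩
  rw [SetLike.mem_coe, LieHom.mem_ker, hρ, LieHom.map_lie, toTraceAlgebra, lift_of_apply,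
    lift_of_apply, Ring.lie_def, MonoidAlgebra.single_mul_single, MonoidAlgebra.single_mul_single,
    TraceMonoid.of_mul_of_comm hadj, sub_self]

theorem isStronglyFree_path (he : Function.Injective e)
    (hρ : ∀ k, ρ k = ⁅of K (e k.castSucc), of K (e k.succ)⁆) :
    IsStronglyFree K (FreeLieAlgebra K X) ρ := by
  set I := lieSpan K (FreeLieAlgebra K X) (Set.range ρ)
  have hG := lie_mem_lieSpan_of_ofPath_adj hρ
  have hI := lieSpan_le_ker_toTraceAlgebra he hρ
  let ε : UniversalEnvelopingAlgebra K (FreeLieAlgebra K X ⧸ I) →ₐ[K] K :=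
    UniversalEnvelopingAlgebra.lift K 0
  have hε : ∀ x, ε (LieIdeal.envι I x) = 0 := fun x => by
    simp [ε, LieIdeal.envι]
  let D := foxDerivative ε (LieIdeal.envι I) fun i =>
    (Finsupp.single i 1 : X →₀ UniversalEnvelopingAlgebra K (FreeLieAlgebra K X ⧸ I))
  refine isStronglyFree_of_linearIndependent ρ (torsion_envelopingAlgebra_eq_bot I hG hI) D
    (foxDerivative_lie ε (LieIdeal.envι I) _ hε) ?_
  have hDρ : D ∘ ρ = fun k => Finsupp.single (e k.succ) (LieIdeal.envι I (of K (e k.castSucc))) -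
      Finsupp.single (e k.castSucc) (LieIdeal.envι I (of K (e k.succ))) := funext fun k => by
    rw [Function.comp_apply, hρ, foxDerivative_lie ε (LieIdeal.envι I) _ hε, foxDerivative_of,
      foxDerivative_of, Finsupp.smul_single_one, Finsupp.smul_single_one]
  rw [hDρ]
  exact linearIndependent_path he (g := fun i => LieIdeal.envι I (of K i))
    fun k => isRightRegular_envι_of I hG hI (e k.succ)

end Path

/-- Let `K` be a commutative ring and `m ≥ 2`.  In the free Lie algebra over `K` on
`ξ₁,…,ξ_m`, the path sequence `ρ₁ = [ξ₁,ξ₂], ρ₂ = [ξ₂,ξ₃], …, ρ_{m−1} = [ξ_{m−1},ξ_m]`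
is strongly free. -/
theorem path_strongly_free (K : Type*) [CommRing K] (m : ℕ) (hm : 2 ≤ m)
    (ρ : Fin (m - 1) → FreeLieAlgebra K (Fin m))
    (hρ : ∀ k : Fin (m - 1),
      ρ k = ⁅FreeLieAlgebra.of K (Fin.cast (show m - 1 + 1 = m by omega) k.castSucc),
             FreeLieAlgebra.of K (Fin.cast (show m - 1 + 1 = m by omega) k.succ)⁆) :
    IsStronglyFree K (FreeLieAlgebra K (Fin m)) ρ :=
  isStronglyFree_path (Fin.cast_injective _) hρ
end

section
/- In the free Lie algebra over the field 𝔽₃ with three elements on generators ξ₁, ξ₂, ξ₃, ξ₄, the sequence ρ₁ = [ξ₁,ξ₂] + [ξ₁,ξ₄], ρ₂ = [ξ₂,ξ₁] + [ξ₂,ξ₃] + [ξ₂,ξ₄], ρ₃ = [ξ₃,ξ₄], ρ₄ = −[ξ₄,ξ₁] − [ξ₄,ξ₃] is strongly free. -/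
open LieSubmodule

section StronglyFree

attribute [local instance 100] LieRing.ofAssociativeRing

variable (K : Type*) [CommRing K] (L : Type*) [LieRing L] [LieAlgebra K L]

end StronglyFree

/-!
Write `ξ₁, …, ξ₄` for the generators (`ξ 0, …, ξ 3` below) and put `u = (ξ₄, ξ₂)`,
`w = (ξ₃ + ξ₄, ξ₁)`. Modulo `𝔯` the four relators say exactly that every `uᵢ` commutes with every
`wⱼ`, so `U𝔤 ≅ K[FreeMonoid 2 × FreeMonoid 2]`. Hence `U𝔤` is a free `K`-module, and right
multiples of `u₀ = ξ₄` and of `u₁ = ξ₂` in it have disjoint supports.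

The images of the `ρᵢ` generate `𝔯/[𝔯,𝔯]` because the `ρᵢ` generate `𝔯`. For independence, the
Fox derivative `D : L → U𝔤⁴` (`D ξⱼ = eⱼ`, `D ⁅x, y⁆ = x • D y - y • D x`) kills `[𝔯, 𝔯]` and
induces a `U𝔤`-linear map `𝔯/[𝔯,𝔯] → U𝔤⁴`. The first and third coordinates of a relation
`∑ cᵢ • D ρᵢ = 0` are equations `p ξ₂ + q ξ₄ = 0`, which force `p = q = 0`, and then all `cᵢ = 0`.
-/

attribute [local instance 100] LieRing.ofAssociativeRing

noncomputable section

section Semidirect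

variable {R L A M : Type*} [CommRing R] [LieRing L] [LieAlgebra R L] [Ring A] [Algebra R A]
  [AddCommGroup M]

theorem LieHom.map_lie_smul [Module A M] (f : L →ₗ⁅R⁆ A) (x y : L) (m : M) :
    f ⁅x, y⁆ • m = f x • f y • m - f y • f x • m := by
  rw [LieHom.map_lie, Ring.lie_def, sub_smul, mul_smul, mul_smul]

/-- `M ⋊ L` for `L` acting on the `A`-module `M` through `f`. -/
def LieSemidirect (_ : L →ₗ⁅R⁆ A) (M : Type*) : Type _ := M × L

namespace LieSemidirect

variable (f : L →ₗ⁅R⁆ A)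

instance : AddCommGroup (LieSemidirect f M) := inferInstanceAs (AddCommGroup (M × L))

@[simp] theorem fst_add {f : L →ₗ⁅R⁆ A} (a b : LieSemidirect f M) : (a + b).1 = a.1 + b.1 := rfl

@[simp] theorem snd_add {f : L →ₗ⁅R⁆ A} (a b : LieSemidirect f M) : (a + b).2 = a.2 + b.2 := rfl

section Module

variable [Module R M]

instance : Module R (LieSemidirect f M) := inferInstanceAs (Module R (M × L))

@[simp] theorem fst_smul {f : L →ₗ⁅R⁆ A} (t : R) (a : LieSemidirect f M) :
    (t • a).1 = t • a.1 := rfl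

@[simp] theorem snd_smul {f : L →ₗ⁅R⁆ A} (t : R) (a : LieSemidirect f M) :
    (t • a).2 = t • a.2 := rfl

end Module

variable [Module A M]

instance : Bracket (LieSemidirect f M) (LieSemidirect f M) where
  bracket a b := (f a.2 • b.1 - f b.2 • a.1, ⁅a.2, b.2⁆)

@[simp] theorem fst_lie {f : L →ₗ⁅R⁆ A} (a b : LieSemidirect f M) :
    ⁅a, b⁆.1 = f a.2 • b.1 - f b.2 • a.1 := rfl

@[simp] theorem snd_lie {f : L →ₗ⁅R⁆ A} (a b : LieSemidirect f M) : ⁅a, b⁆.2 = ⁅a.2, b.2⁆ := rfl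

instance : LieRing (LieSemidirect f M) where
  add_lie a b c := Prod.ext
    (by simp only [fst_lie, fst_add, snd_add, map_add, add_smul, smul_add]; abel) (add_lie _ _ _)
  lie_add a b c := Prod.ext
    (by simp only [fst_lie, fst_add, snd_add, map_add, add_smul, smul_add]; abel) (lie_add _ _ _)
  lie_self a := Prod.ext (sub_self _) (lie_self _)
  leibniz_lie a b c := Prod.ext
    (by simp only [fst_lie, snd_lie, fst_add, f.map_lie_smul, smul_sub]; abel) (leibniz_lie _ _ _)

variable [Module R M] [IsScalarTower R A M]

instance : LieAlgebra R (LieSemidirect f M) where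
  lie_smul t a b := Prod.ext
    (by simp only [fst_lie, fst_smul, snd_smul, map_smul, smul_assoc, smul_comm (f a.2) t,
      smul_sub])
    (lie_smul t a.2 b.2)

def snd : LieSemidirect f M →ₗ⁅R⁆ L where
  toFun a := a.2
  map_add' _ _ := rfl
  map_smul' _ _ := rfl
  map_lie' := rfl

end LieSemidirect

end Semidirect

namespace FreeLieAlgebra

variable {R A M X : Type*} [CommRing R] [Ring A] [Algebra R A] [AddCommGroup M] [Module R M]
  [Module A M] [IsScalarTower R A M] (f : FreeLieAlgebra R X →ₗ⁅R⁆ A) (e : X → M)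

def liftSemidirect : FreeLieAlgebra R X →ₗ⁅R⁆ LieSemidirect f M :=
  lift R fun j => ((e j, of R j) : M × FreeLieAlgebra R X)

theorem snd_liftSemidirect (z : FreeLieAlgebra R X) : (liftSemidirect f e z).2 = z := by
  have : (LieSemidirect.snd f).comp (liftSemidirect f e) = LieHom.id := by
    ext j
    exact congrArg Prod.snd (lift_of_apply (L := LieSemidirect f M) _ j)
  exact LieHom.congr_fun this z

def foxDeriv : FreeLieAlgebra R X →ₗ[R] M :=
  (LinearMap.fst R M (FreeLieAlgebra R X)).comp (liftSemidirect f e).toLinearMap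

theorem foxDeriv_of (j : X) : foxDeriv f e (of R j) = e j :=
  congrArg Prod.fst (lift_of_apply (L := LieSemidirect f M) _ j)

theorem foxDeriv_lie (x y : FreeLieAlgebra R X) :
    foxDeriv f e ⁅x, y⁆ = f x • foxDeriv f e y - f y • foxDeriv f e x := by
  have h := congrArg Prod.fst ((liftSemidirect f e).map_lie x y)
  rwa [LieSemidirect.fst_lie, snd_liftSemidirect, snd_liftSemidirect] at h

end FreeLieAlgebra

theorem UniversalEnvelopingAlgebra.adjoin_range_ι (R L : Type*) [CommRing R] [LieRing L]
    [LieAlgebra R L] :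
    Algebra.adjoin R (Set.range (ι R : L → UniversalEnvelopingAlgebra R L)) = ⊤ := by
  have hι : (ι R : L → UniversalEnvelopingAlgebra R L) = mkAlgHom R L ∘ TensorAlgebra.ι R := rfl
  rw [hι, Set.range_comp, ← AlgHom.map_adjoin, TensorAlgebra.adjoin_range_ι, Algebra.map_top,
    AlgHom.range_eq_top]
  exact RingCon.mkₐ_surjective _

namespace LieIdeal

variable {K L : Type*} [CommRing K] [LieRing L] [LieAlgebra K L] (I : LieIdeal K L)

def quotientMk : L →ₗ⁅K⁆ L ⧸ I :=
  { (LieSubmodule.Quotient.mk' I).toLinearMap with map_lie' := rfl }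

def envelopingMk : L →ₗ⁅K⁆ UniversalEnvelopingAlgebra K (L ⧸ I) :=
  (UniversalEnvelopingAlgebra.ι K).comp I.quotientMk

theorem envelopingMk_eq_zero {x : L} (hx : x ∈ I) : I.envelopingMk x = 0 := by
  have : I.quotientMk x = 0 := (LieSubmodule.Quotient.mk_eq_zero' (N := I)).mpr hx
  rw [envelopingMk, LieHom.comp_apply, this, map_zero]

theorem range_ι_subset_range_envelopingMk :
    Set.range (UniversalEnvelopingAlgebra.ι K (L := L ⧸ I)) ⊆ Set.range I.envelopingMk := by
  rintro _ ⟨z, rfl⟩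
  obtain ⟨y, rfl⟩ := LieSubmodule.Quotient.surjective_mk' I z
  exact ⟨y, rfl⟩

theorem commute_envelopingMk {x y : L} (h : ⁅x, y⁆ ∈ I) :
    Commute (I.envelopingMk x) (I.envelopingMk y) := by
  have h0 := I.envelopingMk_eq_zero h
  rwa [LieHom.map_lie, Ring.lie_def, sub_eq_zero] at h0

variable {A : Type*} [Ring A] [Algebra K A]

theorem algHom_ext_envelopingMk {g₁ g₂ : UniversalEnvelopingAlgebra K (L ⧸ I) →ₐ[K] A}
    (h : ∀ x, g₁ (I.envelopingMk x) = g₂ (I.envelopingMk x)) : g₁ = g₂ := by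
  refine UniversalEnvelopingAlgebra.hom_ext K <| LieHom.ext fun z => ?_
  obtain ⟨y, rfl⟩ := LieSubmodule.Quotient.surjective_mk' I z
  exact h y

def liftEnveloping (ℓ : L →ₗ⁅K⁆ A) (h : I ≤ ℓ.ker) : UniversalEnvelopingAlgebra K (L ⧸ I) →ₐ[K] A :=
  UniversalEnvelopingAlgebra.lift K
    { Submodule.liftQ I.toSubmodule ℓ.toLinearMap (fun _ hx => h hx) with
      map_lie' := by
        rintro ⟨x⟩ ⟨y⟩
        exact ℓ.map_lie x y }

theorem liftEnveloping_envelopingMk (ℓ : L →ₗ⁅K⁆ A) (h : I ≤ ℓ.ker) (x : L) :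
    I.liftEnveloping ℓ h (I.envelopingMk x) = ℓ x :=
  UniversalEnvelopingAlgebra.lift_ι_apply _ _ _

instance : IsScalarTower K (UniversalEnvelopingAlgebra K (L ⧸ I)) (LieIdealAb K L I) :=
  .of_algebraMap_smul fun t v => by
    change UniversalEnvelopingAlgebra.lift K (abelianizationAction K L I) _ v = t • v
    rw [AlgHom.commutes]
    rfl

theorem envelopingMk_smul_mk (y : L) (m : I) :
    I.envelopingMk y • (LieSubmodule.Quotient.mk m : LieIdealAb K L I) =
      LieSubmodule.Quotient.mk ⁅y, m⁆ := by
  change UniversalEnvelopingAlgebra.lift K (abelianizationAction K L I)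
    (UniversalEnvelopingAlgebra.ι K (I.quotientMk y)) _ = _
  rw [UniversalEnvelopingAlgebra.lift_ι_apply]
  rfl

variable {M : Type*} [AddCommGroup M] [Module K M] [Module (UniversalEnvelopingAlgebra K (L ⧸ I)) M]
  (D : L →ₗ[K] M)
  (hD : ∀ x y, D ⁅x, y⁆ = I.envelopingMk x • D y - I.envelopingMk y • D x)
include hD

theorem derivation_eq_zero_of_mem_derived {z : I} (hz : z ∈ derivedLieSubmodule K L I) :
    D z = 0 := by
  induction hz using LieSubmodule.lieSpan_induction with
  | mem z hz =>
    obtain ⟨x, y, hz⟩ := hz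
    rw [hz, hD, I.envelopingMk_eq_zero x.2, I.envelopingMk_eq_zero y.2, zero_smul, zero_smul,
      sub_zero]
  | zero => exact D.map_zero
  | add x y _ _ hx hy => rw [Submodule.coe_add, D.map_add, hx, hy, add_zero]
  | smul t x _ hx => rw [Submodule.coe_smul, D.map_smul, hx, smul_zero]
  | lie x y _ hy =>
    rw [LieSubmodule.coe_bracket, hD, hy, I.envelopingMk_eq_zero y.2, smul_zero, zero_smul,
      sub_zero]

variable [IsScalarTower K (UniversalEnvelopingAlgebra K (L ⧸ I)) M]

def derivationLift : LieIdealAb K L I →ₗ[UniversalEnvelopingAlgebra K (L ⧸ I)] M where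
  toFun := Submodule.liftQ _ (D ∘ₗ I.toSubmodule.subtype)
    fun _ hz => derivation_eq_zero_of_mem_derived I D hD hz
  map_add' := map_add _
  map_smul' c v := by
    have hc : c ∈ Algebra.adjoin K (Set.range (UniversalEnvelopingAlgebra.ι K)) := by
      rw [UniversalEnvelopingAlgebra.adjoin_range_ι]; trivial
    induction hc using Algebra.adjoin_induction generalizing v with
    | mem c hc =>
      obtain ⟨y, rfl⟩ := I.range_ι_subset_range_envelopingMk hc
      obtain ⟨m, rfl⟩ := LieSubmodule.Quotient.surjective_mk' _ v
      change Submodule.liftQ _ _ _ (_ • LieSubmodule.Quotient.mk m) = _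
      rw [envelopingMk_smul_mk]
      change D ⁅y, (m : L)⁆ = I.envelopingMk y • D m
      rw [hD, I.envelopingMk_eq_zero m.2, zero_smul, sub_zero]
    | algebraMap t => simp only [algebraMap_smul, map_smul, RingHom.id_apply]
    | add a b _ _ ha hb => simp only [add_smul, map_add, ha, hb]
    | mul a b _ _ ha hb => simp only [mul_smul, ha, hb, RingHom.id_apply]

theorem derivationLift_mk (m : I) :
    I.derivationLift D hD (LieSubmodule.Quotient.mk m) = D m := rfl

end LieIdeal

theorem span_range_mk_lieSpan_eq_top {K L ι : Type*} [CommRing K] [LieRing L] [LieAlgebra K L]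
    (ρ : ι → L) :
    Submodule.span (UniversalEnvelopingAlgebra K (L ⧸ lieSpan K L (Set.range ρ)))
      (Set.range fun i => (LieSubmodule.Quotient.mk
        ⟨ρ i, subset_lieSpan (Set.mem_range_self i)⟩ : LieIdealAb K L (lieSpan K L (Set.range ρ))))
      = ⊤ := by
  rw [eq_top_iff]
  rintro v -
  obtain ⟨⟨x, hx⟩, rfl⟩ := LieSubmodule.Quotient.surjective_mk' _ v
  induction hx using LieSubmodule.lieSpan_induction with
  | mem x hx =>
    obtain ⟨i, rfl⟩ := hx
    exact Submodule.subset_span ⟨i, rfl⟩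
  | zero => exact zero_mem _
  | add x y _ _ hx hy => exact add_mem hx hy
  | smul t x _ hx => exact Submodule.smul_of_tower_mem _ t hx
  | lie y x hx hmem =>
    change LieSubmodule.Quotient.mk ⁅y, (⟨x, hx⟩ : lieSpan K L (Set.range ρ))⁆ ∈ _
    rw [← LieIdeal.envelopingMk_smul_mk]
    exact Submodule.smul_mem _ _ hmem

theorem Submodule.torsion_eq_bot_of_isTorsionFree {R M : Type*} [CommRing R] [AddCommGroup M]
    [Module R M] [Module.IsTorsionFree R M] : Submodule.torsion R M = ⊥ := by
  refine eq_bot_iff.mpr fun x hx => ?_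
  obtain ⟨a, hax⟩ := (Submodule.mem_torsion_iff x).mp hx
  exact (Module.IsTorsionFree.isSMulRegular (isRegular_iff_mem_nonZeroDivisors.mpr a.2))
    (hax.trans (smul_zero _).symm)

theorem FreeMonoid.mul_of_ne_mul_of {α : Type*} {i j : α} (hij : i ≠ j) (a b : FreeMonoid α) :
    a * of i ≠ b * of j := fun h =>
  hij (by simpa using congrArg (fun x => x.toList.getLast?) h)

theorem FreeMonoid.commute_lift_lift {α β M : Type*} [Monoid M] {a : α → M} {b : β → M}
    (h : ∀ i j, Commute (a i) (b j)) (p : FreeMonoid α) (q : FreeMonoid β) :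
    Commute (lift a p) (lift b q) := by
  rw [lift_apply, lift_apply]
  refine Commute.list_prod_left _ _ fun x hx => Commute.list_prod_right _ _ fun y hy => ?_
  obtain ⟨i, -, rfl⟩ := List.mem_map.mp hx
  obtain ⟨j, -, rfl⟩ := List.mem_map.mp hy
  exact h i j

namespace MonoidAlgebra

theorem eq_zero_of_mul_single_add_mul_single_eq_zero {k G : Type*} [Semiring k] [Monoid G]
    [IsRightCancelMul G] {g h : G} (hgh : ∀ a b, a * g ≠ b * h) {p q : MonoidAlgebra k G}
    (H : p * single g 1 + q * single h 1 = 0) : p = 0 := by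
  ext z
  have hz := congrArg (fun x => x.coeff (z * g)) H
  simp only [coeff_add, Finsupp.add_apply, coeff_zero, Finsupp.coe_zero, Pi.zero_apply] at hz
  rwa [coeff_mul_single_eq_coeff_mul z (fun _ _ => mul_left_inj g), mul_one,
    coeff_mul_single_of_forall_mul_ne _ _ fun b => (hgh z b).symm, add_zero] at hz

variable {k α β A : Type*} [CommSemiring k] [Semiring A] [Algebra k A]

def liftFreeMonoidProd (a : α → A) (b : β → A) (h : ∀ i j, Commute (a i) (b j)) :
    MonoidAlgebra k (FreeMonoid α × FreeMonoid β) →ₐ[k] A :=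
  lift k A _ ((FreeMonoid.lift a).noncommCoprod (FreeMonoid.lift b)
    (FreeMonoid.commute_lift_lift h))

variable (a : α → A) (b : β → A) (h : ∀ i j, Commute (a i) (b j))

theorem liftFreeMonoidProd_single_of_one (i : α) :
    liftFreeMonoidProd (k := k) a b h (single (FreeMonoid.of i, 1) 1) = a i := by
  simp [liftFreeMonoidProd, lift_single]

theorem liftFreeMonoidProd_single_one_of (j : β) :
    liftFreeMonoidProd (k := k) a b h (single (1, FreeMonoid.of j) 1) = b j := by
  simp [liftFreeMonoidProd, lift_single]

end MonoidAlgebra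

namespace KochExample

variable (K : Type*) [CommRing K]

local notation "ξ" j:max => FreeLieAlgebra.of K (j : Fin 4)

def kochRelators : Fin 4 → FreeLieAlgebra K (Fin 4) :=
  ![⁅ξ 0, ξ 1⁆ + ⁅ξ 0, ξ 3⁆,
    ⁅ξ 1, ξ 0⁆ + ⁅ξ 1, ξ 2⁆ + ⁅ξ 1, ξ 3⁆,
    ⁅ξ 2, ξ 3⁆,
    -⁅ξ 3, ξ 0⁆ - ⁅ξ 3, ξ 2⁆]

abbrev kochIdeal : LieIdeal K (FreeLieAlgebra K (Fin 4)) :=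
  lieSpan K _ (Set.range (kochRelators K))

abbrev KochEnveloping : Type _ :=
  UniversalEnvelopingAlgebra K (FreeLieAlgebra K (Fin 4) ⧸ kochIdeal K)

abbrev gen (j : Fin 4) : KochEnveloping K := (kochIdeal K).envelopingMk (ξ j)

abbrev ProdFreeAlgebra : Type _ := MonoidAlgebra K (FreeMonoid (Fin 2) × FreeMonoid (Fin 2))

def u (i : Fin 2) : ProdFreeAlgebra K := MonoidAlgebra.single (FreeMonoid.of i, 1) 1

def w (j : Fin 2) : ProdFreeAlgebra K := MonoidAlgebra.single (1, FreeMonoid.of j) 1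

theorem lie_u_w (i j : Fin 2) : ⁅u K i, w K j⁆ = 0 := by
  simp [u, w, Ring.lie_def, MonoidAlgebra.single_mul_single]

theorem lie_w_u (i j : Fin 2) : ⁅w K j, u K i⁆ = 0 := by
  rw [← lie_skew, lie_u_w, neg_zero]

def kochModel : FreeLieAlgebra K (Fin 4) →ₗ⁅K⁆ ProdFreeAlgebra K :=
  FreeLieAlgebra.lift K ![w K 1, u K 1, w K 0 - u K 0, u K 0]

theorem kochModel_kochRelators (i : Fin 4) : kochModel K (kochRelators K i) = 0 := by
  fin_cases i <;>
    simp [kochRelators, kochModel, lie_sub, sub_lie, lie_u_w, lie_w_u, -lie_skew]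

theorem kochIdeal_le_ker_kochModel : kochIdeal K ≤ (kochModel K).ker :=
  LieSubmodule.lieSpan_le.mpr <| Set.range_subset_iff.mpr (kochModel_kochRelators K)

def toProdFreeAlgebra : KochEnveloping K →ₐ[K] ProdFreeAlgebra K :=
  (kochIdeal K).liftEnveloping (kochModel K) (kochIdeal_le_ker_kochModel K)

theorem kochRelators_mem (i : Fin 4) : kochRelators K i ∈ kochIdeal K :=
  LieSubmodule.subset_lieSpan ⟨i, rfl⟩

theorem lie_mem_kochIdeal (i j : Fin 2) :
    ⁅![ξ 3, ξ 1] i, ![ξ 2 + ξ 3, ξ 0] j⁆ ∈ kochIdeal K := by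
  have h := kochRelators_mem K
  have h32 : ⁅ξ 3, ξ 2⁆ ∈ kochIdeal K := by
    convert neg_mem (h 2) using 1
    simp [kochRelators]
  have h30 : ⁅ξ 3, ξ 0⁆ ∈ kochIdeal K := by
    convert neg_mem (add_mem (h 3) h32) using 1
    simp [kochRelators]
  have h10 : ⁅ξ 1, ξ 0⁆ ∈ kochIdeal K := by
    convert neg_mem (add_mem (h 0) h30) using 1
    simp only [kochRelators, Matrix.cons_val]
    rw [← lie_skew (ξ 0) (ξ 1), ← lie_skew (ξ 0) (ξ 3)]
    abel
  fin_cases i <;> fin_cases j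
  · simpa using h32
  · exact h30
  · convert sub_mem (h 1) h10 using 1
    simp [kochRelators, lie_add]
    abel
  · exact h10

def ofProdFreeAlgebra : ProdFreeAlgebra K →ₐ[K] KochEnveloping K :=
  MonoidAlgebra.liftFreeMonoidProd ![gen K 3, gen K 1] ![gen K 2 + gen K 3, gen K 0]
    fun i j => by
      have := (kochIdeal K).commute_envelopingMk (lie_mem_kochIdeal K i j)
      fin_cases i <;> fin_cases j <;> simpa using this

theorem ofProdFreeAlgebra_kochModel (x : FreeLieAlgebra K (Fin 4)) :
    ofProdFreeAlgebra K (kochModel K x) = (kochIdeal K).envelopingMk x := by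
  have : (ofProdFreeAlgebra K).toLieHom.comp (kochModel K) = (kochIdeal K).envelopingMk := by
    ext j
    fin_cases j <;> simp [kochModel, ofProdFreeAlgebra, u, w,
      MonoidAlgebra.liftFreeMonoidProd_single_of_one,
      MonoidAlgebra.liftFreeMonoidProd_single_one_of]
  exact LieHom.congr_fun this x

theorem ofProdFreeAlgebra_toProdFreeAlgebra (c : KochEnveloping K) :
    ofProdFreeAlgebra K (toProdFreeAlgebra K c) = c := by
  have : (ofProdFreeAlgebra K).comp (toProdFreeAlgebra K) = AlgHom.id K _ :=
    (kochIdeal K).algHom_ext_envelopingMk fun x => by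
      simp [toProdFreeAlgebra, LieIdeal.liftEnveloping_envelopingMk, ofProdFreeAlgebra_kochModel]
  exact AlgHom.congr_fun this c

theorem toProdFreeAlgebra_injective : Function.Injective (toProdFreeAlgebra K) :=
  Function.LeftInverse.injective (ofProdFreeAlgebra_toProdFreeAlgebra K)

theorem toProdFreeAlgebra_gen (j : Fin 4) :
    toProdFreeAlgebra K (gen K j) = ![w K 1, u K 1, w K 0 - u K 0, u K 0] j := by
  simp [toProdFreeAlgebra, LieIdeal.liftEnveloping_envelopingMk, kochModel]

theorem mul_gen_one_add_mul_gen_three_eq_zero_iff {p q : KochEnveloping K} :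
    p * gen K 1 + q * gen K 3 = 0 ↔ p = 0 ∧ q = 0 := by
  refine ⟨fun h => ?_, fun ⟨hp, hq⟩ => by rw [hp, hq, zero_mul, zero_mul, add_zero]⟩
  have hθ := congrArg (toProdFreeAlgebra K) h
  simp only [map_add, map_mul, map_zero, toProdFreeAlgebra_gen] at hθ
  have hne {i j : Fin 2} (hij : i ≠ j) (a b : FreeMonoid (Fin 2) × FreeMonoid (Fin 2)) :
      a * (FreeMonoid.of i, 1) ≠ b * (FreeMonoid.of j, 1) := fun hab =>
    FreeMonoid.mul_of_ne_mul_of hij a.1 b.1 (congrArg Prod.fst hab)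
  have hp := MonoidAlgebra.eq_zero_of_mul_single_add_mul_single_eq_zero (hne one_ne_zero) hθ
  have hq := MonoidAlgebra.eq_zero_of_mul_single_add_mul_single_eq_zero (hne zero_ne_one)
    ((add_comm _ _).trans hθ)
  rw [← map_zero (toProdFreeAlgebra K)] at hp hq
  exact ⟨toProdFreeAlgebra_injective K hp, toProdFreeAlgebra_injective K hq⟩

abbrev kochFox : FreeLieAlgebra K (Fin 4) →ₗ[K] (Fin 4 → KochEnveloping K) :=
  FreeLieAlgebra.foxDeriv (kochIdeal K).envelopingMk fun j => Pi.single j 1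

theorem kochFox_kochRelators (i : Fin 4) :
    kochFox K (kochRelators K i) = ![
      ![-gen K 1 - gen K 3, gen K 0, 0, gen K 0],
      ![gen K 1, -gen K 0 - gen K 2 - gen K 3, gen K 1, gen K 1],
      ![0, 0, -gen K 3, gen K 2],
      ![-gen K 3, 0, -gen K 3, gen K 0 + gen K 2]] i := by
  ext j
  fin_cases i <;> fin_cases j <;>
    simp [kochRelators, FreeLieAlgebra.foxDeriv_lie, FreeLieAlgebra.foxDeriv_of, sub_eq_add_neg]

theorem linearIndependent_kochRelators :
    LinearIndependent (KochEnveloping K) fun i => (LieSubmodule.Quotient.mk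
      ⟨kochRelators K i, kochRelators_mem K i⟩ : LieIdealAb K _ (kochIdeal K)) := by
  rw [Fintype.linearIndependent_iff]
  intro c hc
  have hfox : ∑ i, c i • kochFox K (kochRelators K i) = 0 := by
    simpa [LieIdeal.derivationLift_mk] using congrArg
      ((kochIdeal K).derivationLift (kochFox K) (FreeLieAlgebra.foxDeriv_lie _ _)) hc
  have h0 := congrFun hfox 0
  have h2 := congrFun hfox 2
  simp only [Finset.sum_apply, Fin.sum_univ_four, Pi.smul_apply, smul_eq_mul,
    kochFox_kochRelators, Matrix.cons_val, Pi.zero_apply] at h0 h2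
  obtain ⟨h10, h03⟩ := (mul_gen_one_add_mul_gen_three_eq_zero_iff K).mp
    (show (c 1 - c 0) * gen K 1 + (-c 0 - c 3) * gen K 3 = 0 by rw [← h0]; noncomm_ring)
  obtain ⟨hc1, h23⟩ := (mul_gen_one_add_mul_gen_three_eq_zero_iff K).mp
    (show c 1 * gen K 1 + (-c 2 - c 3) * gen K 3 = 0 by rw [← h2]; noncomm_ring)
  have hc0 : c 0 = 0 := (sub_eq_zero.mp h10).symm.trans hc1
  have hc3 : c 3 = 0 := by rwa [hc0, neg_zero, zero_sub, neg_eq_zero] at h03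
  have hc2 : c 2 = 0 := by rwa [hc3, sub_zero, neg_eq_zero] at h23
  intro i
  fin_cases i <;> assumption

theorem isStronglyFree_kochRelators :
    IsStronglyFree K (FreeLieAlgebra K (Fin 4)) (kochRelators K) := by
  have : Module.IsTorsionFree K (KochEnveloping K) :=
    (toProdFreeAlgebra_injective K).moduleIsTorsionFree _ (map_smul (toProdFreeAlgebra K))
  exact ⟨Submodule.torsion_eq_bot_of_isTorsionFree,
    Module.Basis.mk (linearIndependent_kochRelators K) (span_range_mk_lieSpan_eq_top _).ge,
    fun i => Module.Basis.mk_apply _ _ i⟩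

end KochExample

end

/-- In the free Lie algebra over `𝔽₃` on `ξ₁, ξ₂, ξ₃, ξ₄` (here `ξ_{i+1}` is the generator
indexed by `i : Fin 4`), the sequence
`ρ₁ = [ξ₁,ξ₂] + [ξ₁,ξ₄]`, `ρ₂ = [ξ₂,ξ₁] + [ξ₂,ξ₃] + [ξ₂,ξ₄]`, `ρ₃ = [ξ₃,ξ₄]`,
`ρ₄ = −[ξ₄,ξ₁] − [ξ₄,ξ₃]` is strongly free. -/
theorem example_galois_strongly_free
    (ρ : Fin 4 → FreeLieAlgebra (ZMod 3) (Fin 4))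
    (h1 : ρ 0 = ⁅FreeLieAlgebra.of (ZMod 3) (0 : Fin 4), FreeLieAlgebra.of (ZMod 3) (1 : Fin 4)⁆
        + ⁅FreeLieAlgebra.of (ZMod 3) (0 : Fin 4), FreeLieAlgebra.of (ZMod 3) (3 : Fin 4)⁆)
    (h2 : ρ 1 = ⁅FreeLieAlgebra.of (ZMod 3) (1 : Fin 4), FreeLieAlgebra.of (ZMod 3) (0 : Fin 4)⁆
        + ⁅FreeLieAlgebra.of (ZMod 3) (1 : Fin 4), FreeLieAlgebra.of (ZMod 3) (2 : Fin 4)⁆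
        + ⁅FreeLieAlgebra.of (ZMod 3) (1 : Fin 4), FreeLieAlgebra.of (ZMod 3) (3 : Fin 4)⁆)
    (h3 : ρ 2 = ⁅FreeLieAlgebra.of (ZMod 3) (2 : Fin 4), FreeLieAlgebra.of (ZMod 3) (3 : Fin 4)⁆)
    (h4 : ρ 3 = -⁅FreeLieAlgebra.of (ZMod 3) (3 : Fin 4), FreeLieAlgebra.of (ZMod 3) (0 : Fin 4)⁆
        - ⁅FreeLieAlgebra.of (ZMod 3) (3 : Fin 4), FreeLieAlgebra.of (ZMod 3) (2 : Fin 4)⁆) :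
    IsStronglyFree (ZMod 3) (FreeLieAlgebra (ZMod 3) (Fin 4)) ρ := by
  obtain rfl : ρ = KochExample.kochRelators (ZMod 3) := by
    ext i : 1
    fin_cases i
    exacts [h1, h2, h3, h4]
  exact KochExample.isStronglyFree_kochRelators (ZMod 3)
end
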